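/- Let ρ be an ordinal, a ∈ X, and let y : ℕ → X be a sequence satisfying d (y k) a ≥ ω^ρ · k for every k ∈ ℕ. Then for every b ∈ X such that d a b ≤ ω^ρ · μ₀ for some μ₀ ∈ ℕ, the sequence y is not ρ-limitedly distant from the constant sequence at b. (This is the abstract content of Corollary 4.4: the hypernode [y] lies outside the principal ρ-galaxy, so there is at least one ρ-galaxy different from the principal one.) -/

import Mathlib

/-!
The powers `ω ^ ρ` are closed under the natural sum: by induction on `ρ`, the only real case
being a successor, where every ordinal below `ω ^ σ * ω` is `ω ^ σ * k + r` with `k ∈ ℕ`,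
`r < ω ^ σ`, and such sums add coefficientwise. Hence `ω ^ ρ * m ♯ ω ^ ρ * n ≤ ω ^ ρ * (m + n)`,
so by the triangle inequality `ρ`-limited distance is transitive. If `y` were `ρ`-limitedly
distant from `b`, it would thus be so from `a`, i.e. `d (y k) a ≤ ω ^ ρ * μ` on a set in `F`;
but `d (y k) a ≥ ω ^ ρ * k` makes that set finite, and `F` is free.
-/

open Filter Ordinal
open scoped Ordinal

universe u

/-- Natural (Hessenberg) addition of ordinals, as defined in Mathlib's former
`Mathlib/SetTheory/Ordinal/NaturalOps.lean` (removed from current Mathlib). -/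
noncomputable def Ordinal.nadd (a b : Ordinal.{u}) : Ordinal.{u} :=
  max (⨆ x : Set.Iio a, Order.succ (Ordinal.nadd x.1 b))
    (⨆ x : Set.Iio b, Order.succ (Ordinal.nadd a x.1))
termination_by (a, b)
decreasing_by all_goals cases x; decreasing_tactic

infixl:65 " ♯ " => Ordinal.nadd

/-- Sequences `x, y : ℕ → X` are `ρ`-limitedly distant if there exists `μ ∈ ℕ` with
`{n : d (x n) (y n) ≤ ω^ρ · μ} ∈ F`. -/
def LimitedlyDistant {X : Type*} (d : X → X → Ordinal) (F : Ultrafilter ℕ)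
    (ρ : Ordinal) (x y : ℕ → X) : Prop :=
  ∃ μ : ℕ, {n : ℕ | d (x n) (y n) ≤ ω ^ ρ * μ} ∈ F

namespace Ordinal

theorem nadd_le_iff {a b c : Ordinal} :
    a ♯ b ≤ c ↔ (∀ a' < a, a' ♯ b < c) ∧ (∀ b' < b, a ♯ b' < c) := by
  rw [nadd, max_le_iff, Ordinal.iSup_le_iff, Ordinal.iSup_le_iff]
  simp only [Order.succ_le_iff, Subtype.forall, Set.mem_Iio]

theorem nadd_lt_nadd_right {a b : Ordinal} (h : a < b) (c : Ordinal) : a ♯ c < b ♯ c :=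
  (nadd_le_iff.1 le_rfl).1 a h

theorem nadd_lt_nadd_left {a b : Ordinal} (h : a < b) (c : Ordinal) : c ♯ a < c ♯ b :=
  (nadd_le_iff.1 le_rfl).2 a h

theorem nadd_le_nadd_right {a b : Ordinal} (h : a ≤ b) (c : Ordinal) : a ♯ c ≤ b ♯ c :=
  h.eq_or_lt.elim (fun h => h ▸ le_rfl) fun h => (nadd_lt_nadd_right h c).le

theorem nadd_le_nadd_left {a b : Ordinal} (h : a ≤ b) (c : Ordinal) : c ♯ a ≤ c ♯ b :=
  h.eq_or_lt.elim (fun h => h ▸ le_rfl) fun h => (nadd_lt_nadd_left h c).le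

@[simp]
theorem zero_nadd_zero : (0 : Ordinal) ♯ 0 = 0 :=
  nonpos_iff_eq_zero.1 <| nadd_le_iff.2
    ⟨fun _ h => absurd h (not_lt_of_ge zero_le), fun _ h => absurd h (not_lt_of_ge zero_le)⟩

theorem mul_add_lt_mul {b k m r : Ordinal} (hr : r < b) (hkm : k < m) : b * k + r < b * m :=
  calc b * k + r < b * k + b := add_lt_add_right hr _
    _ = b * Order.succ k := (mul_succ b k).symm
    _ ≤ b * m := mul_le_mul_right (Order.succ_le_of_lt hkm) b

theorem mul_add_lt_mul_add_iff {b k m r s : Ordinal} (hr : r < b) (hs : s < b) :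
    b * k + r < b * m + s ↔ k < m ∨ k = m ∧ r < s := by
  constructor
  · intro h
    rcases lt_trichotomy k m with hkm | rfl | hmk
    · exact .inl hkm
    · exact .inr ⟨rfl, lt_of_add_lt_add_left h⟩
    · exact absurd ((mul_add_lt_mul hs hmk).trans_le le_self_add) h.not_gt
  · rintro (hkm | ⟨rfl, hrs⟩)
    · exact (mul_add_lt_mul hr hkm).trans_le le_self_add
    · exact add_lt_add_right hrs _

theorem mul_natCast_add_lt_mul_omega0 {b r : Ordinal} (hr : r < b) (m : ℕ) :
    b * m + r < b * ω :=
  mul_add_lt_mul hr (natCast_lt_omega0 m)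

theorem exists_eq_mul_natCast_add {a b : Ordinal} (h : a < b * ω) :
    ∃ (k : ℕ) (r : Ordinal), r < b ∧ a = b * k + r := by
  have hb : b ≠ 0 := by rintro rfl; simp at h
  obtain ⟨k, hk⟩ := lt_omega0.1 ((lt_mul_iff_div_lt hb).1 h)
  exact ⟨k, a % b, mod_lt a hb, by rw [← hk, div_add_mod]⟩

/-- The remainders `r, s` make the induction go through: the ordinals below `b * m + r` are the
`b * k + r'` with `(k, r')` lexicographically below `(m, r)`. -/
theorem IsPrincipal.nadd_le_mul_add {b : Ordinal} (hb : IsPrincipal (· ♯ ·) b) {m n : ℕ}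
    {r s : Ordinal} (hr : r < b) (hs : s < b) :
    (b * m + r) ♯ (b * n + s) ≤ b * (m + n : ℕ) + (r ♯ s) := by
  suffices ∀ x y : Ordinal, ∀ (m n : ℕ) (r s : Ordinal), r < b → s < b →
      x = b * m + r → y = b * n + s → x ♯ y ≤ b * (m + n : ℕ) + (r ♯ s) from
    this _ _ m n r s hr hs rfl rfl
  intro x
  induction x using WellFoundedLT.induction with | _ x ihx =>
  intro y
  induction y using WellFoundedLT.induction with | _ y ihy =>
  rintro m n r s hr hs rfl rfl
  refine nadd_le_iff.2 ⟨fun x' hx' => ?_, fun y' hy' => ?_⟩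
  · obtain ⟨k, r', hr', rfl⟩ :=
      exists_eq_mul_natCast_add (hx'.trans (mul_natCast_add_lt_mul_omega0 hr m))
    refine (ihx _ hx' _ k n r' s hr' hs rfl rfl).trans_lt ?_
    rw [mul_add_lt_mul_add_iff (hb hr' hs) (hb hr hs)]
    rcases (mul_add_lt_mul_add_iff hr' hr).1 hx' with hkm | ⟨hkm, hrr⟩
    · exact .inl (Nat.cast_lt.2 (Nat.add_lt_add_right (Nat.cast_lt.1 hkm) n))
    · exact .inr ⟨by rw [Nat.cast_inj.1 hkm], nadd_lt_nadd_right hrr s⟩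
  · obtain ⟨j, s', hs', rfl⟩ :=
      exists_eq_mul_natCast_add (hy'.trans (mul_natCast_add_lt_mul_omega0 hs n))
    refine (ihy _ hy' m j r s' hr hs' rfl rfl).trans_lt ?_
    rw [mul_add_lt_mul_add_iff (hb hr hs') (hb hr hs)]
    rcases (mul_add_lt_mul_add_iff hs' hs).1 hy' with hjn | ⟨hjn, hss⟩
    · exact .inl (Nat.cast_lt.2 (Nat.add_lt_add_left (Nat.cast_lt.1 hjn) m))
    · exact .inr ⟨by rw [Nat.cast_inj.1 hjn], nadd_lt_nadd_left hss r⟩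

theorem IsPrincipal.nadd_mul_omega0 {b : Ordinal} (hb : IsPrincipal (· ♯ ·) b) :
    IsPrincipal (· ♯ ·) (b * ω) := by
  intro x y hx hy
  obtain ⟨m, r, hr, rfl⟩ := exists_eq_mul_natCast_add hx
  obtain ⟨n, s, hs, rfl⟩ := exists_eq_mul_natCast_add hy
  exact (hb.nadd_le_mul_add hr hs).trans_lt (mul_natCast_add_lt_mul_omega0 (hb hr hs) _)

theorem isPrincipal_nadd_omega0_opow (ρ : Ordinal) : IsPrincipal (· ♯ ·) (ω ^ ρ) := by
  induction ρ using Ordinal.limitRecOn with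
  | zero => rw [opow_zero, isPrincipal_one_iff]; exact zero_nadd_zero
  | add_one σ ih => rw [opow_add_one]; exact ih.nadd_mul_omega0
  | limit ρ hρ ih =>
    rw [opow_limit omega0_ne_zero hρ]
    exact IsPrincipal.iSup fun σ => ih σ σ.2

theorem IsPrincipal.mul_natCast_nadd_le {b : Ordinal} (hb : IsPrincipal (· ♯ ·) b) (hb0 : 0 < b)
    (m n : ℕ) : b * m ♯ b * n ≤ b * (m + n : ℕ) := by
  simpa using hb.nadd_le_mul_add (m := m) (n := n) hb0 hb0

end Ordinal

namespace LimitedlyDistant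

variable {X : Type*} {d : X → X → Ordinal} {F : Ultrafilter ℕ} {ρ : Ordinal}

theorem trans (hdtri : ∀ a b c : X, d a c ≤ d a b ♯ d b c) {x y z : ℕ → X}
    (hxy : LimitedlyDistant d F ρ x y) (hyz : LimitedlyDistant d F ρ y z) :
    LimitedlyDistant d F ρ x z := by
  obtain ⟨μ, hμ⟩ := hxy
  obtain ⟨ν, hν⟩ := hyz
  refine ⟨μ + ν, ?_⟩
  filter_upwards [hμ, hν] with n hxy hyz
  calc d (x n) (z n) ≤ d (x n) (y n) ♯ d (y n) (z n) := hdtri _ _ _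
    _ ≤ ω ^ ρ * μ ♯ ω ^ ρ * ν :=
      (nadd_le_nadd_right hxy _).trans (nadd_le_nadd_left hyz _)
    _ ≤ ω ^ ρ * (μ + ν : ℕ) :=
      (isPrincipal_nadd_omega0_opow ρ).mul_natCast_nadd_le (opow_pos ρ omega0_pos) μ ν

theorem const {a b : X} {μ : ℕ} (h : d a b ≤ ω ^ ρ * μ) :
    LimitedlyDistant d F ρ (fun _ => a) (fun _ => b) :=
  ⟨μ, univ_mem' fun _ => h⟩

end LimitedlyDistant

theorem not_limitedlyDistant_const_of_le {X : Type*} {d : X → X → Ordinal} {F : Ultrafilter ℕ}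
    (hF : (F : Filter ℕ) ≤ atTop) {ρ : Ordinal} {a : X} {y : ℕ → X}
    (hy : ∀ k : ℕ, ω ^ ρ * k ≤ d (y k) a) : ¬ LimitedlyDistant d F ρ y (fun _ => a) := by
  rintro ⟨μ, hμ⟩
  have hlarge : {n | μ < n} ∈ F := hF (eventually_gt_atTop μ)
  obtain ⟨n, hyn, hμn⟩ := Ultrafilter.nonempty_of_mem (inter_mem hμ hlarge)
  have : ω ^ ρ * n ≤ ω ^ ρ * μ := (hy n).trans hyn
  exact hμn.not_ge (Nat.cast_le.1 ((mul_le_mul_iff_right₀ (opow_pos ρ omega0_pos)).1 this))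

theorem not_limitedlyDistant_of_unbounded_general
    (X : Type*) (d : X → X → Ordinal)
    (hdsymm : ∀ a b : X, d a b = d b a)
    (hdtri : ∀ a b c : X, d a c ≤ d a b ♯ d b c)
    (F : Ultrafilter ℕ) (hF : ∀ s : Set ℕ, sᶜ.Finite → s ∈ F)
    (ρ : Ordinal) (a : X) (y : ℕ → X)
    (hy : ∀ k : ℕ, ω ^ ρ * k ≤ d (y k) a) :
    ∀ b : X, (∃ μ₀ : ℕ, d a b ≤ ω ^ ρ * μ₀) →
      ¬ LimitedlyDistant d F ρ y (fun _ => b) := by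
  rintro b ⟨μ₀, hab⟩ hyb
  have hF' : (F : Filter ℕ) ≤ atTop :=
    Nat.cofinite_eq_atTop ▸ fun s hs => hF s (mem_cofinite.1 hs)
  have hba : LimitedlyDistant d F ρ (fun _ => b) (fun _ => a) :=
    LimitedlyDistant.const (hdsymm b a ▸ hab)
  exact not_limitedlyDistant_const_of_le hF' hy (hyb.trans hdtri hba)

theorem not_limitedlyDistant_of_unbounded
    (X : Type*) (d : X → X → Ordinal)
    (hd0 : ∀ a b : X, d a b = 0 ↔ a = b)
    (hdsymm : ∀ a b : X, d a b = d b a)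
    (hdtri : ∀ a b c : X, d a c ≤ d a b ♯ d b c)
    (F : Ultrafilter ℕ) (hF : ∀ s : Set ℕ, sᶜ.Finite → s ∈ F)
    (ρ : Ordinal) (a : X) (y : ℕ → X)
    (hy : ∀ k : ℕ, ω ^ ρ * k ≤ d (y k) a) :
    ∀ b : X, (∃ μ₀ : ℕ, d a b ≤ ω ^ ρ * μ₀) →
      ¬ LimitedlyDistant d F ρ y (fun _ => b) :=
  not_limitedlyDistant_of_unbounded_general X d hdsymm hdtri F hF ρ a y hy
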